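/- arXiv:2212.06553 — 8 statements merged into one kernel-verified Lean document; each statement's English description precedes it below -/
import Mathlib

section
/- Let c_1, …, c_N (N ≥ 2) be nonnegative real numbers which are not lopsided, i.e. for every index i one has c_i ≤ Σ_{j ≠ i} c_j. Then there exist complex numbers ζ_1, …, ζ_N with |ζ_i| = 1 for all i such that Σ_{i=1}^N ζ_i c_i = 0. -/
/-!
Let `c i₀` be a largest entry. Splitting the remaining entries greedily into two groups, each
new entry joining the group whose sum is currently smaller, keeps the two group sums `B` and
`C` within `c i₀` of each other. Together with `c i₀ ≤ B + C` this says that `c i₀`, `B`, `C`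
are the side lengths of a (possibly degenerate) triangle, and walking around its boundary gives
the phases: `1` on `i₀` and one phase for each group.
-/

open Complex Finset Real

theorem Finset.exists_subset_abs_sum_sub_sum_sdiff_le {ι : Type*} [DecidableEq ι]
    {f : ι → ℝ} {m : ℝ} (s : Finset ι) (hf₀ : ∀ i ∈ s, 0 ≤ f i) (hfm : ∀ i ∈ s, f i ≤ m)
    (hm : 0 ≤ m) :
    ∃ t ⊆ s, |∑ i ∈ t, f i - ∑ i ∈ s \ t, f i| ≤ m := by
  induction s using Finset.induction_on with
  | empty => exact ⟨∅, subset_refl _, by simpa using hm⟩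
  | insert a s ha ih =>
    obtain ⟨t, hts, hdiff⟩ := ih (fun i hi => hf₀ i (mem_insert_of_mem hi))
      (fun i hi => hfm i (mem_insert_of_mem hi))
    have hat : a ∉ t := fun h => ha (hts h)
    have ha₀ := hf₀ a (mem_insert_self a s)
    have ham := hfm a (mem_insert_self a s)
    rw [abs_le] at hdiff
    by_cases hpos : 0 ≤ ∑ i ∈ t, f i - ∑ i ∈ s \ t, f i
    · refine ⟨t, hts.trans (subset_insert a s), ?_⟩
      rw [insert_sdiff_of_notMem s hat, sum_insert (fun h => ha (mem_sdiff.mp h).1), abs_le]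
      constructor <;> linarith
    · refine ⟨insert a t, insert_subset_insert a hts, ?_⟩
      rw [insert_sdiff_insert, sdiff_insert_of_notMem ha, sum_insert hat, abs_le]
      constructor <;> linarith

theorem exists_norm_add_mul_exp_eq {a b c : ℝ} (hsub : |a - b| ≤ c) (hadd : c ≤ |a + b|) :
    ∃ θ : ℝ, ‖(a : ℂ) + b * exp (θ * I)‖ = c := by
  let g : ℝ → ℝ := fun θ => ‖(a : ℂ) + b * exp (θ * I)‖
  have hg0 : g 0 = |a + b| := by
    simp only [g, ofReal_zero, zero_mul, Complex.exp_zero, mul_one]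
    exact_mod_cast norm_real (a + b)
  have hgπ : g π = |a - b| := by
    simp only [g, exp_pi_mul_I, mul_neg_one, ← sub_eq_add_neg]
    exact_mod_cast norm_real (a - b)
  have hcont : ContinuousOn g (Set.Icc 0 π) := by fun_prop
  obtain ⟨θ, -, hθ⟩ :=
    intermediate_value_Icc' pi_nonneg hcont (by rw [hg0, hgπ]; exact ⟨hsub, hadd⟩)
  exact ⟨θ, hθ⟩

theorem exists_phases_of_triangle {a b c : ℝ} (hab : a ≤ b + c) (hba : b ≤ a + c)
    (hc : c ≤ a + b) :
    ∃ v w : ℂ, ‖v‖ = 1 ∧ ‖w‖ = 1 ∧ (a : ℂ) + v * b + w * c = 0 := by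
  have hsub : |a - b| ≤ c := abs_sub_le_iff.mpr ⟨by linarith, by linarith⟩
  have hadd : c ≤ |a + b| := hc.trans (le_abs_self _)
  obtain ⟨θ, hθ⟩ := exists_norm_add_mul_exp_eq hsub hadd
  set z : ℂ := a + b * exp (θ * I)
  refine ⟨exp (θ * I), -exp (z.arg * I), norm_exp_ofReal_mul_I θ, ?_, ?_⟩
  · rw [norm_neg, norm_exp_ofReal_mul_I]
  · have hz : ‖z‖ * exp (z.arg * I) = z := norm_mul_exp_arg_mul_I z
    rw [hθ] at hz
    linear_combination -hz

theorem Finset.sum_ite_mem_mul {ι R : Type*} [DecidableEq ι] [NonUnitalNonAssocSemiring R]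
    {s t : Finset ι} (hts : t ⊆ s) (v w : R) (f : ι → R) :
    ∑ i ∈ s, (if i ∈ t then v else w) * f i = v * ∑ i ∈ t, f i + w * ∑ i ∈ s \ t, f i := by
  rw [← sum_sdiff hts, add_comm, mul_sum, mul_sum]
  congr 1
  · exact sum_congr rfl fun i hi => by rw [if_pos hi]
  · exact sum_congr rfl fun i hi => by rw [if_neg (mem_sdiff.mp hi).2]

theorem not_lopsided_exists_phases_general
    (N : ℕ) (c : Fin N → ℝ)
    (hc : ∀ i, 0 ≤ c i)
    (h : ∀ i, c i ≤ ∑ j ∈ Finset.univ.erase i, c j) :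
    ∃ ζ : Fin N → ℂ, (∀ i, ‖ζ i‖ = 1) ∧ ∑ i, ζ i * (c i : ℂ) = 0 := by
  rcases isEmpty_or_nonempty (Fin N) with hempty | hne
  · exact ⟨fun _ => 1, fun _ => norm_one, by simp⟩
  obtain ⟨i₀, -, hmax⟩ := univ.exists_max_image c univ_nonempty
  set s := univ.erase i₀
  obtain ⟨t, hts, hdiff⟩ := s.exists_subset_abs_sum_sub_sum_sdiff_le (fun i _ => hc i)
    (fun i _ => hmax i (mem_univ i)) (hc i₀)
  have hsplit : ∑ i ∈ s \ t, c i + ∑ i ∈ t, c i = ∑ i ∈ s, c i := sum_sdiff hts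
  rw [abs_le] at hdiff
  obtain ⟨v, w, hv, hw, hvw⟩ := exists_phases_of_triangle
    (a := c i₀) (b := ∑ i ∈ t, c i) (c := ∑ i ∈ s \ t, c i)
    (by linarith [h i₀]) (by linarith) (by linarith)
  refine ⟨fun i => if i = i₀ then 1 else if i ∈ t then v else w, fun i => ?_, ?_⟩
  · dsimp only
    split_ifs <;> simp [hv, hw]
  · have hrest : ∑ i ∈ s, (if i = i₀ then 1 else if i ∈ t then v else w) * (c i : ℂ)
        = ∑ i ∈ s, (if i ∈ t then v else w) * (c i : ℂ) :=
      sum_congr rfl fun i hi => by rw [if_neg (ne_of_mem_erase hi)]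
    rw [← add_sum_erase _ _ (mem_univ i₀), hrest, sum_ite_mem_mul hts]
    dsimp only
    rw [if_pos rfl, one_mul, ← add_assoc]
    exact_mod_cast hvw

/-- If a list of nonnegative reals `c 1, …, c N` (with `N ≥ 2`) is not lopsided, i.e. every
`c i` is at most the sum of the others, then there are phases `ζ i` on the unit circle with
`∑ i, ζ i * c i = 0`. -/
theorem not_lopsided_exists_phases
    (N : ℕ) (hN : 2 ≤ N) (c : Fin N → ℝ)
    (hc : ∀ i, 0 ≤ c i)
    (h : ∀ i, c i ≤ ∑ j ∈ Finset.univ.erase i, c j) :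
    ∃ ζ : Fin N → ℂ, (∀ i, ‖ζ i‖ = 1) ∧ ∑ i, ζ i * (c i : ℂ) = 0 :=
  not_lopsided_exists_phases_general N c hc h
end

section
/- Let k be a real number and let P(z,w) = k − z − z^{-1} − w − w^{-1} be the Newton polynomial of 𝔽₀ = ℙ¹×ℙ¹. For (x,y) ∈ ℝ²: (i) if 2·cosh x + 2·cosh y < |k| then (x,y) does not belong to the amoeba of P; (ii) if k ≠ 0 and 2·cosh x + 2·cosh y = |k| then (x,y) belongs to the amoeba of P. Consequently, for k with |k| > 4 the set {(x,y) : 2·cosh x + 2·cosh y < |k|} is a nonempty bounded complement component (hole) of the amoeba, whose boundary is the curve x = ln| |k|/2 − cosh y ± √((|k|/2 − cosh y)² − 1) |. -/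
/-- The amoeba of the `𝔽₀ = ℙ¹×ℙ¹` Newton polynomial `P(z,w) = k - z - z⁻¹ - w - w⁻¹`. -/
def amoebaF0 (k : ℝ) : Set (ℝ × ℝ) :=
  {p | ∃ z w : ℂ, z ≠ 0 ∧ w ≠ 0 ∧ (k : ℂ) - z - z⁻¹ - w - w⁻¹ = 0 ∧
    Real.log ‖z‖ = p.1 ∧ Real.log ‖w‖ = p.2}

/-- The candidate hole `{(x,y) : 2 cosh x + 2 cosh y < |k|}`. -/
def holeF0 (k : ℝ) : Set (ℝ × ℝ) :=
  {p | 2 * Real.cosh p.1 + 2 * Real.cosh p.2 < |k|}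

/-!
On the torus `Log⁻¹(x, y)` the monomials `z, z⁻¹, w, w⁻¹` have moduli `eˣ, e⁻ˣ, eʸ, e⁻ʸ`, whose sum
is `2 cosh x + 2 cosh y`. By the triangle inequality `P` cannot vanish there when this sum is less
than `|k|`; when it equals `|k|` all four monomials can be aligned with `k`, namely
`(z, w) = ± (eˣ, eʸ)`. So the amoeba meets the region `2 cosh x + 2 cosh y ≤ |k|` exactly in its
boundary level set; since `2 cosh x + 2 cosh y` is convex, the open region is connected, hence a
whole component of the complement, and its frontier is that level set.
-/

open Real Set

noncomputable def coshSum (p : ℝ × ℝ) : ℝ :=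
  2 * cosh p.1 + 2 * cosh p.2

theorem continuous_coshSum : Continuous coshSum := by
  unfold coshSum; fun_prop

theorem coshSum_zero : coshSum 0 = 4 := by
  norm_num [coshSum]

theorem convexOn_cosh : ConvexOn ℝ univ cosh := by
  have hneg : ConvexOn ℝ univ fun x => exp (-x) :=
    convexOn_exp.comp_linearMap (-LinearMap.id)
  refine ((convexOn_exp.add hneg).smul (c := (1 / 2 : ℝ)) (by norm_num)).congr fun x _ => ?_
  simp only [Pi.add_apply, smul_eq_mul, cosh_eq]
  ring

theorem convexOn_coshSum : ConvexOn ℝ univ coshSum := by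
  have h1 := (convexOn_cosh.comp_linearMap (LinearMap.fst ℝ ℝ ℝ)).smul (c := (2 : ℝ)) (by norm_num)
  have h2 := (convexOn_cosh.comp_linearMap (LinearMap.snd ℝ ℝ ℝ)).smul (c := (2 : ℝ)) (by norm_num)
  exact h1.add h2

theorem abs_lt_cosh (u : ℝ) : |u| < cosh u :=
  (self_le_sinh_iff.2 (abs_nonneg u)).trans_lt ((sinh_lt_cosh _).trans_eq (cosh_abs u))

theorem isBounded_setOf_coshSum_lt (c : ℝ) : Bornology.IsBounded {p | coshSum p < c} := by
  refine ((Metric.isBounded_Icc (-c) c).prod (Metric.isBounded_Icc (-c) c)).subset ?_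
  rintro ⟨x, y⟩ (hp : 2 * cosh x + 2 * cosh y < c)
  have hx := abs_lt_cosh x
  have hy := abs_lt_cosh y
  have := cosh_pos x
  have := cosh_pos y
  refine ⟨abs_le.1 ?_, abs_le.1 ?_⟩ <;> linarith

theorem norm_add_inv_le_two_cosh_log_norm {𝕜 : Type*} [NormedDivisionRing 𝕜] {z : 𝕜}
    (hz : z ≠ 0) : ‖z + z⁻¹‖ ≤ 2 * cosh (log ‖z‖) := by
  rw [cosh_log (norm_pos_iff.2 hz), ← norm_inv]
  linarith [norm_add_le z z⁻¹]

theorem abs_le_coshSum_of_mem_amoebaF0 {k : ℝ} {p : ℝ × ℝ} (hp : p ∈ amoebaF0 k) :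
    |k| ≤ coshSum p := by
  obtain ⟨x, y⟩ := p
  obtain ⟨z, w, hz, hw, hP, rfl, rfl⟩ := hp
  have hk : (k : ℂ) = (z + z⁻¹) + (w + w⁻¹) := by linear_combination hP
  calc |k| = ‖(k : ℂ)‖ := (Complex.norm_real k).symm
    _ ≤ ‖z + z⁻¹‖ + ‖w + w⁻¹‖ := hk ▸ norm_add_le _ _
    _ ≤ _ := add_le_add (norm_add_inv_le_two_cosh_log_norm hz)
        (norm_add_inv_le_two_cosh_log_norm hw)

theorem amoebaF0_neg (k : ℝ) : amoebaF0 (-k) = amoebaF0 k := by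
  have key : ∀ k : ℝ, amoebaF0 (-k) ⊆ amoebaF0 k := by
    rintro k p ⟨z, w, hz, hw, hP, hx, hy⟩
    refine ⟨-z, -w, neg_ne_zero.2 hz, neg_ne_zero.2 hw, ?_, by rwa [norm_neg], by rwa [norm_neg]⟩
    push_cast at hP
    rw [inv_neg, inv_neg]
    linear_combination -hP
  exact (key k).antisymm (by simpa using key (-k))

theorem amoebaF0_abs (k : ℝ) : amoebaF0 |k| = amoebaF0 k := by
  rcases abs_choice k with h | h <;> rw [h]
  exact amoebaF0_neg k

theorem mem_amoebaF0_coshSum (p : ℝ × ℝ) : p ∈ amoebaF0 (coshSum p) := by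
  refine ⟨Complex.exp p.1, Complex.exp p.2, Complex.exp_ne_zero _, Complex.exp_ne_zero _, ?_,
    by rw [Complex.norm_exp_ofReal, log_exp], by rw [Complex.norm_exp_ofReal, log_exp]⟩
  simp only [coshSum, Complex.ofReal_add, Complex.ofReal_mul, Complex.ofReal_cosh,
    Complex.cosh, ← Complex.exp_neg]
  push_cast
  ring

theorem connectedComponentIn_eq_setOf_lt {X α : Type*} [TopologicalSpace X] [LinearOrder α]
    [TopologicalSpace α] [OrderClosedTopology α] {f : X → α} (hf : Continuous f) {c : α}
    {S : Set X} (hltS : {x | f x < c} ⊆ S) (hS : ∀ x ∈ S, f x ≠ c)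
    (hpre : IsPreconnected {x | f x < c}) {p : X} (hp : f p < c) :
    connectedComponentIn S p = {x | f x < c} := by
  refine subset_antisymm ?_ (hpre.subset_connectedComponentIn hp hltS)
  refine isPreconnected_connectedComponentIn.subset_left_of_subset_union
    (isOpen_lt hf continuous_const) (isOpen_lt continuous_const hf)
    (disjoint_left.2 fun x hlt hgt => lt_asymm hlt hgt) (fun x hx => ?_)
    ⟨p, mem_connectedComponentIn (hltS hp), hp⟩
  exact (hS x (connectedComponentIn_subset S p hx)).lt_or_gt

theorem ConvexOn.mem_closure_setOf_lt {E : Type*} [AddCommGroup E] [Module ℝ E]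
    [TopologicalSpace E] [ContinuousAdd E] [ContinuousSMul ℝ E] {f : E → ℝ}
    (hf : ConvexOn ℝ univ f) {c : ℝ} {a x : E} (ha : f a < c) (hx : f x ≤ c) :
    x ∈ closure {y | f y < c} := by
  refine closure_mono ?_ (segment_subset_closure_openSegment (right_mem_segment ℝ a x))
  rintro _ ⟨s, t, hs, ht, hst, rfl⟩
  calc f (s • a + t • x) ≤ s * f a + t * f x := hf.2 (mem_univ a) (mem_univ x) hs.le ht.le hst
    _ < s * c + t * c :=
        add_lt_add_of_lt_of_le (mul_lt_mul_of_pos_left ha hs) (mul_le_mul_of_nonneg_left hx ht.le)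
    _ = c := by rw [← add_mul, hst, one_mul]

theorem ConvexOn.frontier_setOf_lt {E : Type*} [AddCommGroup E] [Module ℝ E]
    [TopologicalSpace E] [ContinuousAdd E] [ContinuousSMul ℝ E] {f : E → ℝ}
    (hf : ConvexOn ℝ univ f) (hfc : Continuous f) {c : ℝ} {a : E} (ha : f a < c) :
    frontier {x | f x < c} = {x | f x = c} := by
  refine (frontier_lt_subset_eq hfc continuous_const).antisymm fun x (hx : f x = c) => ?_
  rw [frontier, (isOpen_lt hfc continuous_const).interior_eq]
  exact ⟨hf.mem_closure_setOf_lt ha hx.le, hx.not_lt⟩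

theorem exists_eq_log_abs_cosh_add_sqrt (x : ℝ) :
    ∃ ε : ℝ, (ε = 1 ∨ ε = -1) ∧ x = log |cosh x + ε * √(cosh x ^ 2 - 1)| := by
  rw [cosh_sq, add_sub_cancel_right, sqrt_sq_eq_abs]
  rcases le_total 0 x with hx | hx
  · refine ⟨1, Or.inl rfl, ?_⟩
    rw [abs_of_nonneg (sinh_nonneg_iff.2 hx), one_mul, cosh_add_sinh, abs_exp, log_exp]
  · refine ⟨-1, Or.inr rfl, ?_⟩
    rw [abs_of_nonpos (sinh_nonpos_iff.2 hx), neg_one_mul, neg_neg, cosh_add_sinh, abs_exp,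
      log_exp]

/-- For `P(z,w) = k - z - z⁻¹ - w - w⁻¹`:
(i) points with `2 cosh x + 2 cosh y < |k|` are not in the amoeba;
(ii) if `k ≠ 0`, points with `2 cosh x + 2 cosh y = |k|` are in the amoeba;
and for `|k| > 4` the set `{2 cosh x + 2 cosh y < |k|}` is a nonempty bounded
complement component (hole) of the amoeba, whose boundary is the curve
`x = ln ||k|/2 − cosh y ± √((|k|/2 − cosh y)² − 1)|`. -/
theorem amoeba_hole_F0 (k : ℝ) :
    (∀ x y : ℝ, 2 * Real.cosh x + 2 * Real.cosh y < |k| → (x, y) ∉ amoebaF0 k) ∧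
    (k ≠ 0 → ∀ x y : ℝ, 2 * Real.cosh x + 2 * Real.cosh y = |k| → (x, y) ∈ amoebaF0 k) ∧
    (4 < |k| →
      (holeF0 k).Nonempty ∧
      Bornology.IsBounded (holeF0 k) ∧
      (∀ p ∈ holeF0 k, connectedComponentIn (amoebaF0 k)ᶜ p = holeF0 k) ∧
      frontier (holeF0 k) = {p : ℝ × ℝ | 2 * Real.cosh p.1 + 2 * Real.cosh p.2 = |k|} ∧
      ∀ p ∈ frontier (holeF0 k), ∃ ε : ℝ, (ε = 1 ∨ ε = -1) ∧
        p.1 = Real.log |(|k| / 2 - Real.cosh p.2) +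
          ε * Real.sqrt ((|k| / 2 - Real.cosh p.2) ^ 2 - 1)|) := by
  have hole_not_mem : ∀ p ∈ holeF0 k, p ∉ amoebaF0 k := fun p hp hmem =>
    (abs_le_coshSum_of_mem_amoebaF0 hmem).not_gt hp
  have level_mem : ∀ p : ℝ × ℝ, coshSum p = |k| → p ∈ amoebaF0 k := fun p hp => by
    simpa [hp, amoebaF0_abs] using mem_amoebaF0_coshSum p
  refine ⟨fun x y => hole_not_mem (x, y), fun _ x y => level_mem (x, y), fun h4 => ?_⟩
  have h0 : coshSum 0 < |k| := coshSum_zero ▸ h4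
  have hfrontier : frontier (holeF0 k) = {p | coshSum p = |k|} :=
    convexOn_coshSum.frontier_setOf_lt continuous_coshSum h0
  refine ⟨⟨0, h0⟩, isBounded_setOf_coshSum_lt _, fun p hp => ?_, hfrontier, ?_⟩
  · exact connectedComponentIn_eq_setOf_lt continuous_coshSum hole_not_mem
      (fun q hq heq => hq (level_mem q heq)) (by simpa using (convexOn_coshSum.convex_lt |k|).isPreconnected) hp
  · rintro ⟨x, y⟩ hp
    rw [hfrontier] at hp
    have hx : |k| / 2 - cosh y = cosh x := by linarith [show 2 * cosh x + 2 * cosh y = |k| from hp]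
    rw [hx]
    exact exists_eq_log_abs_cosh_add_sqrt x
end

section
/- Let p(z,w) be a Laurent polynomial in two complex variables, and let M = max_{|z|=|w|=1} |p(z,w)|. Then the function k ↦ m(k − p) is strictly increasing on the interval (M, ∞) of real k, where m denotes the Mahler measure. That is, for real numbers k₂ > k₁ > M one has m(k₁ − p(z,w)) < m(k₂ − p(z,w)). -/
/-!
Since `‖p‖ ≤ M < k₁ < k₂` on the torus, the point `p(z,w)` lies strictly to the left of `k₁`
on the real axis, so it is strictly closer to `k₁` than to `k₂`, and `k₁ - p` never vanishes.
Hence the integrand `log ‖k - p‖` is continuous for `k > M` and strictly increasing in `k`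
pointwise, and integrating a strict inequality between continuous functions over the square
`[0, 2π]²` keeps it strict.
-/

open Complex

theorem Complex.norm_ofReal_sub_lt_norm_ofReal_sub {q : ℂ} {k₁ k₂ : ℝ} (hq : q.re ≤ k₁)
    (hk : k₁ < k₂) : ‖(k₁ : ℂ) - q‖ < ‖(k₂ : ℂ) - q‖ := by
  rw [norm_def, norm_def]
  refine Real.sqrt_lt_sqrt (normSq_nonneg _) ?_
  simp only [normSq_apply, sub_re, sub_im, ofReal_re, ofReal_im]
  nlinarith

theorem Complex.ofReal_sub_ne_zero_of_re_lt {q : ℂ} {k : ℝ} (hq : q.re < k) :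
    (k : ℂ) - q ≠ 0 := by
  intro h
  have := congrArg re h
  simp only [sub_re, ofReal_re, zero_re] at this
  linarith

theorem Complex.log_norm_ofReal_sub_lt {q : ℂ} {k₁ k₂ : ℝ} (hq : q.re < k₁) (hk : k₁ < k₂) :
    Real.log ‖(k₁ : ℂ) - q‖ < Real.log ‖(k₂ : ℂ) - q‖ :=
  Real.log_lt_log (norm_pos_iff.2 (ofReal_sub_ne_zero_of_re_lt hq))
    (norm_ofReal_sub_lt_norm_ofReal_sub hq.le hk)

theorem continuous_sum_mul_zpow_mul_zpow {X : Type*} [TopologicalSpace X] {ι : Type*}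
    (s : Finset ι) (c : ι → ℂ) (a b : ι → ℤ) {u v : X → ℂ} (hu : Continuous u)
    (hv : Continuous v) (hu₀ : ∀ x, u x ≠ 0) (hv₀ : ∀ x, v x ≠ 0) :
    Continuous fun x => ∑ j ∈ s, c j * u x ^ a j * v x ^ b j :=
  continuous_finsetSum _ fun _ _ =>
    (continuous_const.mul (hu.zpow₀ _ fun x => .inl (hu₀ x))).mul
      (hv.zpow₀ _ fun x => .inl (hv₀ x))

theorem intervalIntegral.integral_lt_integral_of_continuous_of_lt {f g : ℝ → ℝ} {a b : ℝ}
    (hab : a < b) (hf : Continuous f) (hg : Continuous g) (hfg : ∀ x, f x < g x) :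
    ∫ x in a..b, f x < ∫ x in a..b, g x :=
  integral_lt_integral_of_continuousOn_of_le_of_exists_lt hab hf.continuousOn hg.continuousOn
    (fun x _ => (hfg x).le) ⟨a, Set.left_mem_Icc.2 hab.le, hfg a⟩

theorem intervalIntegral.integral_integral_lt_of_continuous_of_lt {f g : ℝ × ℝ → ℝ}
    {a b c d : ℝ} (hab : a < b) (hcd : c < d) (hf : Continuous f) (hg : Continuous g)
    (hfg : ∀ x, f x < g x) :
    ∫ x in a..b, ∫ y in c..d, f (x, y) < ∫ x in a..b, ∫ y in c..d, g (x, y) :=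
  integral_lt_integral_of_continuous_of_lt hab
    (continuous_parametric_intervalIntegral_of_continuous' (f := fun x y => f (x, y)) hf c d)
    (continuous_parametric_intervalIntegral_of_continuous' (f := fun x y => g (x, y)) hg c d)
    fun x => integral_lt_integral_of_continuous_of_lt hcd (by fun_prop) (by fun_prop)
      fun y => hfg (x, y)

/-- For a two-variable Laurent polynomial `p` with `M = max_{|z|=|w|=1} |p(z,w)|`, the
Mahler measure `k ↦ m(k − p)` is strictly increasing on `(M, ∞)`. -/
theorem mahler_strictly_increasing
    (N : ℕ) (c : Fin N → ℂ) (a b : Fin N → ℤ)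
    (p : ℂ → ℂ → ℂ)
    (hp : ∀ z w : ℂ, p z w = ∑ j, c j * z ^ (a j) * w ^ (b j))
    (M : ℝ)
    (hM : IsGreatest {x : ℝ | ∃ θ φ : ℝ,
      x = ‖p (Complex.exp (Complex.I * (θ : ℂ)))
        (Complex.exp (Complex.I * (φ : ℂ)))‖} M)
    (m : ℝ → ℝ)
    (hm : ∀ k : ℝ, m k = (1 / (2 * Real.pi) ^ 2) *
      ∫ θ in (0 : ℝ)..(2 * Real.pi), ∫ φ in (0 : ℝ)..(2 * Real.pi),
        Real.log ‖(k : ℂ) -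
          p (Complex.exp (Complex.I * (θ : ℂ))) (Complex.exp (Complex.I * (φ : ℂ)))‖) :
    ∀ k₁ k₂ : ℝ, M < k₁ → k₁ < k₂ → m k₁ < m k₂ := by
  intro k₁ k₂ hk₁ hk₁₂
  set P : ℝ × ℝ → ℂ := fun x => p (exp (I * x.1)) (exp (I * x.2))
  have hP : Continuous P := by
    simp only [P, hp]
    exact continuous_sum_mul_zpow_mul_zpow _ c a b (by fun_prop) (by fun_prop)
      (fun _ => exp_ne_zero _) (fun _ => exp_ne_zero _)
  have hre : ∀ k, M < k → ∀ x, (P x).re < k := fun k hk x =>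
    ((re_le_norm _).trans (hM.2 ⟨x.1, x.2, rfl⟩)).trans_lt hk
  have hlog : ∀ k, M < k → Continuous fun x => Real.log ‖(k : ℂ) - P x‖ := fun k hk =>
    (continuous_const.sub hP).norm.log fun x => norm_ne_zero_iff.2 <|
      ofReal_sub_ne_zero_of_re_lt (hre k hk x)
  rw [hm k₁, hm k₂]
  refine mul_lt_mul_of_pos_left ?_ (by positivity)
  exact intervalIntegral.integral_integral_lt_of_continuous_of_lt Real.two_pi_pos
    Real.two_pi_pos (hlog k₁ hk₁) (hlog k₂ (hk₁.trans hk₁₂))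
    fun x => log_norm_ofReal_sub_lt (hre k₁ hk₁ x) hk₁₂
end

section
/- Let p(z,w) be a Laurent polynomial in two complex variables, let M = max_{|z|=|w|=1} |p(z,w)|, and for n ≥ 1 let a_n = (2π)^{-2} ∫₀^{2π} ∫₀^{2π} p(e^{iθ}, e^{iφ})^n dθ dφ (the constant Laurent coefficient of p^n). Then for every real k > M the series Σ_{n≥1} a_n/(n k^n) converges absolutely and the Mahler measure satisfies m(k − p) = log k − Re( Σ_{n=1}^{∞} a_n/(n k^n) ). -/
/-!
When `‖p‖ ≤ M < k` on the torus, `log ‖k - p‖ = log k - Re ∑ₙ pⁿ / (n kⁿ)` pointwise, by the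
Taylor series of `-log (1 - z)` at `z = p / k`. The series has the geometric majorant
`∑ (M / k)ⁿ`, so it may be integrated term by term over the torus (dominated convergence), and
the `n`-th term integrates to `aₙ / (n kⁿ)`. The same majorant, integrated, bounds
`|aₙ| / (n kⁿ)` by a convergent geometric series.
-/

open MeasureTheory Set

namespace Complex

lemma hasSum_pow_div_succ_mul_pow {z k : ℂ} (h : ‖z‖ < ‖k‖) :
    HasSum (fun n : ℕ => z ^ (n + 1) / ((n + 1) * k ^ (n + 1))) (-log (1 - z / k)) := by
  have hk : 0 < ‖k‖ := (norm_nonneg z).trans_lt h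
  have hzk : ‖z / k‖ < 1 := by rwa [norm_div, div_lt_one hk]
  convert hasSum_taylorSeries_neg_log' hzk using 2 with n
  rw [div_pow, div_div, mul_comm]

lemma norm_pow_div_succ_mul_pow_le {z k : ℂ} {M : ℝ} (hz : ‖z‖ ≤ M) (n : ℕ) :
    ‖z ^ (n + 1) / ((n + 1) * k ^ (n + 1))‖ ≤ (M / ‖k‖) ^ (n + 1) := by
  have hn : (1 : ℝ) ≤ ‖(n : ℂ) + 1‖ := by
    rw [← Nat.cast_succ, norm_natCast]; exact_mod_cast n.succ_pos
  obtain rfl | hk := eq_or_ne k 0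
  · simp
  rw [norm_div, norm_mul, norm_pow, norm_pow, div_pow]
  calc ‖z‖ ^ (n + 1) / (‖(n : ℂ) + 1‖ * ‖k‖ ^ (n + 1))
      ≤ ‖z‖ ^ (n + 1) / ‖k‖ ^ (n + 1) :=
        div_le_div_of_nonneg_left (by positivity) (by positivity)
          (le_mul_of_one_le_left (by positivity) hn)
    _ ≤ M ^ (n + 1) / ‖k‖ ^ (n + 1) := by gcongr

lemma norm_log_one_sub_div_le {z k : ℂ} {M : ℝ} (hz : ‖z‖ ≤ M) (hMk : M < ‖k‖) :
    ‖log (1 - z / k)‖ ≤ M / ‖k‖ * (1 - M / ‖k‖)⁻¹ := by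
  have hk : 0 < ‖k‖ := (norm_nonneg z).trans_lt (hz.trans_lt hMk)
  have hgeom := (hasSum_geometric_of_lt_one (div_nonneg ((norm_nonneg z).trans hz) hk.le)
    ((div_lt_one hk).2 hMk)).mul_left (M / ‖k‖)
  rw [← norm_neg]
  exact (hasSum_pow_div_succ_mul_pow (hz.trans_lt hMk)).norm_le_of_bounded hgeom
    fun n => (norm_pow_div_succ_mul_pow_le hz n).trans_eq (pow_succ' _ _)

lemma re_neg_log_one_sub_div {z k : ℂ} (hk : k ≠ 0) (hzk : z ≠ k) :
    (-log (1 - z / k)).re = Real.log ‖k‖ - Real.log ‖k - z‖ := by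
  rw [neg_re, log_re, one_sub_div hk, norm_div,
    Real.log_div (norm_ne_zero_iff.2 (sub_ne_zero.2 hzk.symm)) (norm_ne_zero_iff.2 hk)]
  ring

end Complex

section FiniteMeasure

variable {α : Type*} [MeasurableSpace α] {μ : Measure α} [IsFiniteMeasure μ]
  {F : α → ℂ} {M : ℝ} {k : ℂ}

lemma integrable_log_one_sub_div (hF : AEStronglyMeasurable F μ)
    (hFM : ∀ᵐ q ∂μ, ‖F q‖ ≤ M) (hMk : M < ‖k‖) :
    Integrable (fun q => Complex.log (1 - F q / k)) μ :=
  .of_bound (Complex.measurable_log.comp_aemeasurable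
      (aemeasurable_const.sub (hF.aemeasurable.div_const k))).aestronglyMeasurable _
    (hFM.mono fun _ hq => Complex.norm_log_one_sub_div_le hq hMk)

lemma hasSum_integral_pow_div_succ_mul_pow (hF : AEStronglyMeasurable F μ)
    (hFM : ∀ᵐ q ∂μ, ‖F q‖ ≤ M) (hM : 0 ≤ M) (hMk : M < ‖k‖) :
    HasSum (fun n : ℕ => (∫ q, F q ^ (n + 1) ∂μ) / ((n + 1) * k ^ (n + 1)))
      (∫ q, -Complex.log (1 - F q / k) ∂μ) := by
  have hr : M / ‖k‖ < 1 := (div_lt_one (hM.trans_lt hMk)).2 hMk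
  simp_rw [← integral_div]
  refine hasSum_integral_of_dominated_convergence (fun n _ => (M / ‖k‖) ^ (n + 1))
    (fun n => by fun_prop)
    (fun n => hFM.mono fun _ hq => Complex.norm_pow_div_succ_mul_pow_le hq n)
    (.of_forall fun _ => (summable_nat_add_iff 1).2
      (summable_geometric_of_lt_one (by positivity) hr))
    (integrable_const _)
    (hFM.mono fun _ hq => Complex.hasSum_pow_div_succ_mul_pow (hq.trans_lt hMk))

lemma summable_norm_integral_pow_div_succ_mul_pow (hFM : ∀ᵐ q ∂μ, ‖F q‖ ≤ M) (hM : 0 ≤ M)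
    (hMk : M < ‖k‖) :
    Summable (fun n : ℕ => ‖∫ q, F q ^ (n + 1) ∂μ‖ / ((n + 1) * ‖k‖ ^ (n + 1))) := by
  have hr : M / ‖k‖ < 1 := (div_lt_one (hM.trans_lt hMk)).2 hMk
  refine Summable.of_nonneg_of_le (fun n => by positivity) (fun n => ?_)
    (((summable_nat_add_iff 1).2 (summable_geometric_of_lt_one (by positivity) hr)).mul_right
      (μ.real univ))
  have hterm : ‖∫ q, F q ^ (n + 1) ∂μ‖ / ((n + 1) * ‖k‖ ^ (n + 1)) =
      ‖∫ q, F q ^ (n + 1) / ((n + 1) * k ^ (n + 1)) ∂μ‖ := by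
    have hn : ‖(n : ℂ) + 1‖ = n + 1 := by exact_mod_cast Complex.norm_natCast (n + 1)
    rw [integral_div, norm_div, norm_mul, norm_pow, hn]
  rw [hterm]
  exact norm_integral_le_of_norm_le_const
    (hFM.mono fun _ hq => Complex.norm_pow_div_succ_mul_pow_le hq n)

theorem integral_log_norm_sub_eq_tsum (hF : AEStronglyMeasurable F μ)
    (hFM : ∀ᵐ q ∂μ, ‖F q‖ ≤ M) (hM : 0 ≤ M) (hMk : M < ‖k‖) :
    ∫ q, Real.log ‖k - F q‖ ∂μ = μ.real univ * Real.log ‖k‖ -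
      (∑' n : ℕ, (∫ q, F q ^ (n + 1) ∂μ) / ((n + 1) * k ^ (n + 1))).re := by
  have hk : k ≠ 0 := norm_pos_iff.1 (hM.trans_lt hMk)
  have hlog : Integrable (fun q => -Complex.log (1 - F q / k)) μ :=
    (integrable_log_one_sub_div hF hFM hMk).neg
  have hlog_re : Integrable (fun q => (-Complex.log (1 - F q / k)).re) μ := hlog.re
  have hpointwise : (fun q => Real.log ‖k - F q‖) =ᵐ[μ]
      fun q => Real.log ‖k‖ - (-Complex.log (1 - F q / k)).re :=
    hFM.mono fun q hq => by
      dsimp only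
      rw [Complex.re_neg_log_one_sub_div hk fun h => (hq.trans_lt hMk).ne (h ▸ rfl), sub_sub_cancel]
  rw [(hasSum_integral_pow_div_succ_mul_pow hF hFM hM hMk).tsum_eq, integral_congr_ae hpointwise,
    integral_sub (integrable_const _) hlog_re, integral_const, smul_eq_mul, mul_comm]
  congr 1
  exact integral_re hlog

end FiniteMeasure

lemma intervalIntegral_intervalIntegral_eq_setIntegral_prod {E : Type*} [NormedAddCommGroup E]
    [NormedSpace ℝ E] {f : ℝ × ℝ → E} (hf : Continuous f) {a b c d : ℝ} (hab : a ≤ b)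
    (hcd : c ≤ d) :
    ∫ x in a..b, ∫ y in c..d, f (x, y) = ∫ q in Ioc a b ×ˢ Ioc c d, f q := by
  simp_rw [intervalIntegral.integral_of_le hab, intervalIntegral.integral_of_le hcd]
  rw [Measure.volume_eq_prod, setIntegral_prod]
  exact (hf.continuousOn.integrableOn_compact (isCompact_Icc.prod isCompact_Icc)).mono_set
    (prod_mono Ioc_subset_Icc_self Ioc_subset_Icc_self)

lemma volume_real_Ioc_prod_Ioc {a b c d : ℝ} (hab : a ≤ b) (hcd : c ≤ d) :
    volume.real (Ioc a b ×ˢ Ioc c d) = (b - a) * (d - c) := by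
  rw [Measure.volume_eq_prod, measureReal_prod_prod, Real.volume_real_Ioc_of_le hab,
    Real.volume_real_Ioc_of_le hcd]

instance isFiniteMeasure_restrict_Ioc_prod_Ioc (a b c d : ℝ) :
    IsFiniteMeasure (volume.restrict (Ioc a b ×ˢ Ioc c d)) :=
  isFiniteMeasure_restrict.2
    ((Metric.isBounded_Ioc a b).prod (Metric.isBounded_Ioc c d)).measure_lt_top.ne

lemma continuous_sum_mul_exp_zpow_mul_exp_zpow {ι : Type*} [Fintype ι] (c : ι → ℂ)
    (a b : ι → ℤ) :
    Continuous fun q : ℝ × ℝ => ∑ j, c j * Complex.exp (Complex.I * (q.1 : ℂ)) ^ (a j) *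
      Complex.exp (Complex.I * (q.2 : ℂ)) ^ (b j) := by
  have hexp : ∀ n : ℤ, Continuous fun x : ℝ => Complex.exp (Complex.I * (x : ℂ)) ^ n :=
    fun n => (by fun_prop : Continuous fun x : ℝ => Complex.exp (Complex.I * (x : ℂ))).zpow₀ n
      fun _ => Or.inl (Complex.exp_ne_zero _)
  exact continuous_finsetSum _ fun j _ =>
    (continuous_const.mul ((hexp (a j)).comp continuous_fst)).mul ((hexp (b j)).comp continuous_snd)

/-- For a two-variable Laurent polynomial `p` with `M = max_{|z|=|w|=1} |p|` and
`a n` the constant Laurent coefficient of `pⁿ`, for every real `k > M` the series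
`∑_{n≥1} a n / (n kⁿ)` converges absolutely and
`m(k − p) = log k − Re (∑_{n≥1} a n / (n kⁿ))`. -/
theorem mahler_expansion
    (N : ℕ) (c : Fin N → ℂ) (a b : Fin N → ℤ)
    (p : ℂ → ℂ → ℂ)
    (hp : ∀ z w : ℂ, p z w = ∑ j, c j * z ^ (a j) * w ^ (b j))
    (M : ℝ)
    (hM : IsGreatest {x : ℝ | ∃ θ φ : ℝ,
      x = ‖p (Complex.exp (Complex.I * (θ : ℂ)))
        (Complex.exp (Complex.I * (φ : ℂ)))‖} M)
    (m : ℝ → ℝ)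
    (hm : ∀ k : ℝ, m k = (1 / (2 * Real.pi) ^ 2) *
      ∫ θ in (0 : ℝ)..(2 * Real.pi), ∫ φ in (0 : ℝ)..(2 * Real.pi),
        Real.log (‖(k : ℂ) -
          p (Complex.exp (Complex.I * (θ : ℂ))) (Complex.exp (Complex.I * (φ : ℂ)))‖))
    (A : ℕ → ℂ)
    (hA : ∀ n : ℕ, A n = ((1 : ℂ) / (2 * Real.pi) ^ 2) *
      ∫ θ in (0 : ℝ)..(2 * Real.pi), ∫ φ in (0 : ℝ)..(2 * Real.pi),
        (p (Complex.exp (Complex.I * (θ : ℂ))) (Complex.exp (Complex.I * (φ : ℂ)))) ^ n) :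
    ∀ k : ℝ, M < k →
      Summable (fun n : ℕ => ‖A (n + 1)‖ / ((n + 1) * k ^ (n + 1))) ∧
      m k = Real.log k -
        (∑' n : ℕ, A (n + 1) / (((n : ℂ) + 1) * (k : ℂ) ^ (n + 1))).re := by
  intro k hk
  set F : ℝ × ℝ → ℂ := fun q =>
    p (Complex.exp (Complex.I * (q.1 : ℂ))) (Complex.exp (Complex.I * (q.2 : ℂ)))
  have hFc : Continuous F := by
    simpa only [F, hp] using continuous_sum_mul_exp_zpow_mul_exp_zpow c a b
  have hFM : ∀ q, ‖F q‖ ≤ M := fun q => hM.2 ⟨q.1, q.2, rfl⟩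
  have hM0 : 0 ≤ M := (norm_nonneg _).trans (hFM 0)
  have hk0 : 0 < k := hM0.trans_lt hk
  have hMk : M < ‖(k : ℂ)‖ := by rwa [Complex.norm_real, Real.norm_of_nonneg hk0.le]
  have h2π : 0 ≤ 2 * Real.pi := by positivity
  set μ : Measure (ℝ × ℝ) := volume.restrict (Ioc 0 (2 * Real.pi) ×ˢ Ioc 0 (2 * Real.pi))
  have hμ : μ.real univ = (2 * Real.pi) ^ 2 := by
    rw [measureReal_restrict_apply_univ, volume_real_Ioc_prod_Ioc h2π h2π, sub_zero, sq]
  have hAμ : ∀ n, A n = (1 : ℂ) / (2 * Real.pi) ^ 2 * ∫ q, F q ^ n ∂μ := fun n => by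
    rw [hA, ← intervalIntegral_intervalIntegral_eq_setIntegral_prod
      (f := fun q => F q ^ n) (hFc.pow n) h2π h2π]
  have hmμ : m k = 1 / (2 * Real.pi) ^ 2 * ∫ q, Real.log ‖(k : ℂ) - F q‖ ∂μ := by
    rw [hm, ← intervalIntegral_intervalIntegral_eq_setIntegral_prod _ h2π h2π]
    exact (continuous_const.sub hFc).norm.log fun q =>
      norm_ne_zero_iff.2 (sub_ne_zero.2 fun h => (h ▸ hFM q).not_gt hMk)
  have hsum := summable_norm_integral_pow_div_succ_mul_pow (μ := μ) (.of_forall hFM) hM0 hMk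
  have hlog := integral_log_norm_sub_eq_tsum (μ := μ) hFc.aestronglyMeasurable
    (.of_forall hFM) hM0 hMk
  rw [Complex.norm_real, Real.norm_of_nonneg hk0.le] at hsum hlog
  have hscale : (1 : ℂ) / (2 * Real.pi) ^ 2 = ((1 / (2 * Real.pi) ^ 2 : ℝ) : ℂ) := by
    push_cast; rfl
  refine ⟨(hsum.div_const ((2 * Real.pi) ^ 2)).congr fun n => ?_, ?_⟩
  · rw [hAμ, norm_mul, hscale, Complex.norm_real, Real.norm_of_nonneg (by positivity)]
    ring
  · rw [hmμ, hlog, hμ]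
    simp_rw [hAμ, mul_div_assoc, tsum_mul_left, hscale, Complex.re_ofReal_mul]
    field_simp
end

section
/- For every complex number k₂ and every natural number n ≥ 1, the constant Laurent coefficient of (k₂ z + z^{-1} + z w + z² w^{-1})^n, namely (2π)^{-2} ∫₀^{2π} ∫₀^{2π} (k₂ e^{iθ} + e^{-iθ} + e^{i(θ+φ)} + e^{i(2θ−φ)})^n dθ dφ, equals Σ_{i} C(n,i) · C(n−i, (n−i)/2) · C(i, (5i−3n)/4) · k₂^{(5i−3n)/4}, where the sum runs over integers 0 ≤ i ≤ n such that n − i is even, 5i − 3n is nonnegative and divisible by 4, and C denotes the binomial coefficient (with C(a,b) = 0 when b > a). -/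
/-!
Expanding `((k z + z⁻¹) + (z w + z² w⁻¹))ⁿ` by the binomial theorem, first in the two pairs and
then inside each pair, writes the integrand as a sum of Laurent monomials `k^a z^p w^q` on the
torus `z = e^{iθ}`, `w = e^{iφ}`. By orthogonality of the characters only the monomials with
`p = q = 0` survive the torus average. With `i` factors taken from the first pair, `a` of them
equal to `k z`, and `c` factors `z w` from the second pair, `q = 2c + i - n` and
`p = 2a + 2n - 3i - c`; so `p = q = 0` forces `c = (n - i)/2` and `4a = 5i - 3n`, and each `i`
contributes at most one term.
-/

open Complex Finset

theorem continuous_exp_mul_I_zpow (m : ℤ) : Continuous fun x : ℝ => exp (I * x) ^ m := by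
  simp_rw [← exp_int_mul]
  fun_prop

theorem integral_exp_mul_I_zpow (m : ℤ) :
    ∫ x in (0 : ℝ)..2 * Real.pi, exp (I * x) ^ m = if m = 0 then (2 * Real.pi : ℂ) else 0 := by
  split_ifs with hm
  · simp [hm]
  have hc : I * m ≠ 0 := mul_ne_zero I_ne_zero (by exact_mod_cast hm)
  have hperiod : exp (I * m * (2 * Real.pi)) = 1 := by
    rw [← exp_int_mul_two_pi_mul_I m]
    ring_nf
  simp_rw [← exp_int_mul, mul_left_comm _ I, ← mul_assoc]
  rw [integral_exp_mul_complex hc]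
  push_cast
  simp [hperiod]

theorem integral_sum_mul_exp_mul_I_zpow {ι : Type*} (s : Finset ι) (c : ι → ℂ) (m : ι → ℤ) :
    ∫ x in (0 : ℝ)..2 * Real.pi, ∑ j ∈ s, c j * exp (I * x) ^ m j
      = 2 * Real.pi * ∑ j ∈ s with m j = 0, c j := by
  rw [intervalIntegral.integral_finsetSum fun j _ =>
    ((continuous_exp_mul_I_zpow (m j)).const_mul (c j)).intervalIntegrable _ _]
  simp_rw [intervalIntegral.integral_const_mul, integral_exp_mul_I_zpow, mul_ite, mul_zero]
  rw [← sum_filter, ← sum_mul, mul_comm]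

theorem integral_integral_sum_mul_exp_mul_I_zpow {ι : Type*} (s : Finset ι) (c : ι → ℂ)
    (p q : ι → ℤ) :
    ∫ θ in (0 : ℝ)..2 * Real.pi, ∫ φ in (0 : ℝ)..2 * Real.pi,
        ∑ j ∈ s, c j * exp (I * θ) ^ p j * exp (I * φ) ^ q j
      = (2 * Real.pi) ^ 2 * ∑ j ∈ s with p j = 0 ∧ q j = 0, c j := by
  simp_rw [integral_sum_mul_exp_mul_I_zpow, intervalIntegral.integral_const_mul,
    integral_sum_mul_exp_mul_I_zpow, filter_filter, and_comm]
  ring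

namespace NewtonPolynomialC3Z5

theorem term_eq_monomial {K : Type*} [Field K] {z w : K} (hz : z ≠ 0) (hw : w ≠ 0) (k : K)
    (a b c d : ℕ) :
    (k * z) ^ a * z⁻¹ ^ b * (z * w) ^ c * (z ^ 2 * w⁻¹) ^ d
      = k ^ a * z ^ ((a : ℤ) - b + c + 2 * d) * w ^ ((c : ℤ) - d) := by
  simp only [zpow_add₀ hz, zpow_sub₀ hz, zpow_sub₀ hw, zpow_mul, zpow_natCast, zpow_ofNat,
    mul_pow, inv_pow]
  field_simp

/- `⟨i, (a, c)⟩` labels the term of the expansion of `((k z + z⁻¹) + (z w + z² w⁻¹))ⁿ` with `i`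
factors from the first pair, `a` of them `k z`, and `c` of the remaining `n - i` factors `z w`. -/
def expansionIndex (n : ℕ) : Finset (Σ _ : ℕ, ℕ × ℕ) :=
  (range (n + 1)).sigma fun i => range (i + 1) ×ˢ range (n - i + 1)

def zExponent (n : ℕ) (t : Σ _ : ℕ, ℕ × ℕ) : ℤ := 2 * t.2.1 + 2 * n - 3 * t.1 - t.2.2

def wExponent (n : ℕ) (t : Σ _ : ℕ, ℕ × ℕ) : ℤ := 2 * t.2.2 + t.1 - n

def expansionCoeff {K : Type*} [Semiring K] (k : K) (n : ℕ) (t : Σ _ : ℕ, ℕ × ℕ) : K :=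
  n.choose t.1 * (n - t.1).choose t.2.2 * t.1.choose t.2.1 * k ^ t.2.1

theorem pow_eq_sum_expansionIndex {K : Type*} [Field K] {z w : K} (hz : z ≠ 0) (hw : w ≠ 0)
    (k : K) (n : ℕ) :
    (k * z + z⁻¹ + z * w + z ^ 2 * w⁻¹) ^ n
      = ∑ t ∈ expansionIndex n,
          expansionCoeff k n t * z ^ zExponent n t * w ^ wExponent n t := by
  rw [add_assoc _ (z * w), add_pow, expansionIndex, sum_sigma]
  refine sum_congr rfl fun i hi => ?_
  rw [add_pow, add_pow, sum_mul_sum, sum_product, sum_mul]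
  refine sum_congr rfl fun a ha => ?_
  rw [sum_mul]
  refine sum_congr rfl fun c hc => ?_
  obtain ⟨b, rfl⟩ := Nat.exists_eq_add_of_le (mem_range_succ_iff.mp ha)
  obtain ⟨d, hd⟩ := Nat.exists_eq_add_of_le (mem_range_succ_iff.mp hc)
  obtain rfl : n = a + b + c + d := by have := mem_range_succ_iff.mp hi; omega
  have hz_exp : zExponent (a + b + c + d) ⟨a + b, (a, c)⟩ = (a : ℤ) - b + c + 2 * d := by
    simp only [zExponent]; push_cast; ring
  have hw_exp : wExponent (a + b + c + d) ⟨a + b, (a, c)⟩ = (c : ℤ) - d := by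
    simp only [wExponent]; push_cast; ring
  simp only [expansionCoeff, hz_exp, hw_exp, hd, Nat.add_sub_cancel_left]
  linear_combination ((a + b + c + d).choose (a + b) * (c + d).choose c * (a + b).choose a : K) *
    term_eq_monomial hz hw k a b c d

theorem exponents_eq_zero_iff {n i a c : ℕ} (hi : i ≤ n) :
    zExponent n ⟨i, (a, c)⟩ = 0 ∧ wExponent n ⟨i, (a, c)⟩ = 0 ↔
      (2 ∣ n - i ∧ 3 * n ≤ 5 * i ∧ 4 ∣ 5 * i - 3 * n) ∧
        a = (5 * i - 3 * n) / 4 ∧ c = (n - i) / 2 := by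
  simp only [zExponent, wExponent]
  omega

theorem filter_expansionIndex_exponents_eq_zero (n : ℕ) :
    {t ∈ expansionIndex n | zExponent n t = 0 ∧ wExponent n t = 0}
      = {i ∈ range (n + 1) | 2 ∣ n - i ∧ 3 * n ≤ 5 * i ∧ 4 ∣ 5 * i - 3 * n}.image
          fun i => ⟨i, ((5 * i - 3 * n) / 4, (n - i) / 2)⟩ := by
  ext ⟨i, a, c⟩
  simp only [expansionIndex, mem_filter, mem_sigma, mem_product, mem_range, mem_image,
    Sigma.mk.injEq, Prod.mk.injEq, heq_eq_eq]
  constructor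
  · rintro ⟨⟨hi, -, -⟩, hexp⟩
    obtain ⟨hcond, rfl, rfl⟩ := (exponents_eq_zero_iff (Nat.lt_succ_iff.mp hi)).mp hexp
    exact ⟨i, ⟨hi, hcond⟩, rfl, rfl, rfl⟩
  · rintro ⟨i, ⟨hi, hcond⟩, rfl, rfl, rfl⟩
    exact ⟨⟨hi, by omega, by omega⟩,
      (exponents_eq_zero_iff (Nat.lt_succ_iff.mp hi)).mpr ⟨hcond, rfl, rfl⟩⟩

theorem sum_expansionCoeff_exponents_eq_zero {K : Type*} [Semiring K] (k : K) (n : ℕ) :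
    ∑ t ∈ expansionIndex n with zExponent n t = 0 ∧ wExponent n t = 0, expansionCoeff k n t
      = ∑ i ∈ range (n + 1) with 2 ∣ n - i ∧ 3 * n ≤ 5 * i ∧ 4 ∣ 5 * i - 3 * n,
          (n.choose i : K) * (n - i).choose ((n - i) / 2) * i.choose ((5 * i - 3 * n) / 4) *
            k ^ ((5 * i - 3 * n) / 4) := by
  rw [filter_expansionIndex_exponents_eq_zero, sum_image fun i _ j _ h => congrArg Sigma.fst h]
  rfl

end NewtonPolynomialC3Z5

open NewtonPolynomialC3Z5 in
theorem constant_term_C3Z5_general (k₂ : ℂ) (n : ℕ) :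
    ((1 : ℂ) / (2 * Real.pi) ^ 2) *
        ∫ θ in (0 : ℝ)..(2 * Real.pi), ∫ φ in (0 : ℝ)..(2 * Real.pi),
          (k₂ * Complex.exp (Complex.I * (θ : ℂ)) + Complex.exp (-(Complex.I * (θ : ℂ))) +
            Complex.exp (Complex.I * ((θ : ℂ) + (φ : ℂ))) +
            Complex.exp (Complex.I * (2 * (θ : ℂ) - (φ : ℂ)))) ^ n
      = ∑ i ∈ (Finset.range (n + 1)).filter
            (fun i => 2 ∣ (n - i) ∧ 3 * n ≤ 5 * i ∧ 4 ∣ (5 * i - 3 * n)),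
          (Nat.choose n i : ℂ) * (Nat.choose (n - i) ((n - i) / 2) : ℂ) *
            (Nat.choose i ((5 * i - 3 * n) / 4) : ℂ) * k₂ ^ ((5 * i - 3 * n) / 4) := by
  have hexpand (θ φ : ℝ) :
      (k₂ * exp (I * θ) + exp (-(I * θ)) + exp (I * (θ + φ)) + exp (I * (2 * θ - φ))) ^ n
        = ∑ t ∈ expansionIndex n,
            expansionCoeff k₂ n t * exp (I * θ) ^ zExponent n t * exp (I * φ) ^ wExponent n t := by
    rw [← pow_eq_sum_expansionIndex (exp_ne_zero _) (exp_ne_zero _)]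
    simp only [two_mul, sq, mul_add, mul_sub, exp_add, exp_sub, exp_neg, div_eq_mul_inv]
  simp_rw [hexpand, integral_integral_sum_mul_exp_mul_I_zpow, sum_expansionCoeff_exponents_eq_zero]
  field_simp

/-- The constant Laurent coefficient of `(k₂ z + z⁻¹ + z w + z² w⁻¹)ⁿ`, computed as a torus
average, equals `∑ᵢ C(n,i) C(n−i,(n−i)/2) C(i,(5i−3n)/4) k₂^((5i−3n)/4)`, the sum running
over `0 ≤ i ≤ n` with `n − i` even and `5i − 3n` nonnegative and divisible by `4`. -/
theorem constant_term_C3Z5 (k₂ : ℂ) (n : ℕ) (hn : 1 ≤ n) :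
    ((1 : ℂ) / (2 * Real.pi) ^ 2) *
        ∫ θ in (0 : ℝ)..(2 * Real.pi), ∫ φ in (0 : ℝ)..(2 * Real.pi),
          (k₂ * Complex.exp (Complex.I * (θ : ℂ)) + Complex.exp (-(Complex.I * (θ : ℂ))) +
            Complex.exp (Complex.I * ((θ : ℂ) + (φ : ℂ))) +
            Complex.exp (Complex.I * (2 * (θ : ℂ) - (φ : ℂ)))) ^ n
      = ∑ i ∈ (Finset.range (n + 1)).filter
            (fun i => 2 ∣ (n - i) ∧ 3 * n ≤ 5 * i ∧ 4 ∣ (5 * i - 3 * n)),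
          (Nat.choose n i : ℂ) * (Nat.choose (n - i) ((n - i) / 2) : ℂ) *
            (Nat.choose i ((5 * i - 3 * n) / 4) : ℂ) * k₂ ^ ((5 * i - 3 * n) / 4) :=
  constant_term_C3Z5_general k₂ n
end

section
/- For every natural number m, the constant Laurent coefficient of (u + u^{-1} + v + v^{-1} + w + w^{-1})^m, namely (2π)^{-3} ∫₀^{2π} ∫₀^{2π} ∫₀^{2π} (2cos θ₁ + 2cos θ₂ + 2cos θ₃)^m dθ₁ dθ₂ dθ₃, equals C(2n, n) · Σ_{l=0}^{n} C(2l, l) · C(n, l)² when m = 2n is even, and equals 0 when m is odd, where C denotes the binomial coefficient. -/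
/-!
Expanding `(x + 2 cos θ)^p` binomially, the average over `θ` of each power `(2 cos θ)^k` is its
constant term `cosMoment k` (the central binomial coefficient `C(k, k/2)` for even `k`, else `0`),
obtained from the reduction formula for `∫ cos^k`. Integrating out one angle at a time turns the
triple average into an iterated binomial convolution of `cosMoment` with itself, which vanishes in
odd degree. In degree `2n` only even indices survive, and the identity
`C(2n,2l) C(2l,l) C(2n-2l,n-l) = C(2n,n) C(n,l)²` together with `∑ C(s,b)² = C(2s,s)` evaluates it.
-/

open Real intervalIntegral Finset

lemma sum_range_two_mul_add_one_of_odd {M : Type*} [AddCommMonoid M] {f : ℕ → M}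
    (hf : ∀ k, Odd k → f k = 0) (n : ℕ) :
    ∑ k ∈ range (2 * n + 1), f k = ∑ l ∈ range (n + 1), f (2 * l) := by
  induction n with
  | zero => simp
  | succ n ih =>
    rw [show 2 * (n + 1) + 1 = 2 * n + 1 + 1 + 1 by ring, sum_range_succ, sum_range_succ, ih,
      hf _ (odd_two_mul_add_one n), add_zero, sum_range_succ (fun l => f (2 * l)) (n + 1),
      mul_add_one]

lemma choose_mul_centralBinom_mul_centralBinom {n l : ℕ} (h : l ≤ n) :
    (2 * n).choose (2 * l) * Nat.centralBinom l * Nat.centralBinom (n - l)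
      = Nat.centralBinom n * n.choose l ^ 2 := by
  refine Nat.eq_of_mul_eq_mul_right (mul_pos (pow_pos (Nat.factorial_pos l) 2)
    (pow_pos (Nat.factorial_pos (n - l)) 2)) ?_
  have hc (a : ℕ) : Nat.centralBinom a * (a.factorial * a.factorial) = (2 * a).factorial := by
    rw [Nat.centralBinom_eq_two_mul_choose, ← mul_assoc,
      ← Nat.choose_mul_factorial_mul_factorial (by omega : a ≤ 2 * a)]
    congr 2; omega
  calc (2 * n).choose (2 * l) * Nat.centralBinom l * Nat.centralBinom (n - l)
        * (l.factorial ^ 2 * (n - l).factorial ^ 2)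
      = (2 * n).choose (2 * l) * (2 * l).factorial * (2 * (n - l)).factorial := by
        rw [← hc, ← hc]; ring
    _ = (2 * n).factorial := by
        rw [Nat.mul_sub, Nat.choose_mul_factorial_mul_factorial (by omega)]
    _ = Nat.centralBinom n * n.choose l ^ 2 * (l.factorial ^ 2 * (n - l).factorial ^ 2) := by
        rw [← hc, ← Nat.choose_mul_factorial_mul_factorial h]; ring

lemma integral_finset_sum_const_mul {ι : Type*} (s : Finset ι) (c : ι → ℝ) {f : ι → ℝ → ℝ}
    (hf : ∀ i ∈ s, Continuous (f i)) (a b : ℝ) :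
    ∫ x in a..b, ∑ i ∈ s, c i * f i x = ∑ i ∈ s, c i * ∫ x in a..b, f i x := by
  rw [integral_finsetSum fun i hi => ((hf i hi).intervalIntegrable a b).const_mul (c i)]
  simp_rw [integral_const_mul]

def cosMoment (k : ℕ) : ℕ := if Even k then Nat.centralBinom (k / 2) else 0

lemma cosMoment_two_mul (a : ℕ) : cosMoment (2 * a) = Nat.centralBinom a := by
  simp [cosMoment]

lemma cosMoment_of_odd {k : ℕ} (hk : Odd k) : cosMoment k = 0 := by
  simp [cosMoment, Nat.not_even_iff_odd.2 hk]

lemma cosMoment_add_two (k : ℕ) :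
    (k + 2) * cosMoment (k + 2) = 4 * (k + 1) * cosMoment k := by
  rcases Nat.even_or_odd' k with ⟨a, rfl | rfl⟩
  · rw [show 2 * a + 2 = 2 * (a + 1) by ring, cosMoment_two_mul, cosMoment_two_mul,
      mul_assoc, Nat.succ_mul_centralBinom_succ]
    ring
  · have hodd : Odd (2 * a + 1) := ⟨a, rfl⟩
    rw [cosMoment_of_odd hodd, cosMoment_of_odd (hodd.add_even even_two), mul_zero, mul_zero]

lemma integral_two_cos_pow (k : ℕ) :
    ∫ θ in (0 : ℝ)..2 * π, (2 * cos θ) ^ k = 2 * π * cosMoment k := by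
  induction k using Nat.twoStepInduction with
  | zero => simp [cosMoment]
  | one => simp [cosMoment]
  | more k ih _ =>
    have hrec : ∫ θ in (0 : ℝ)..2 * π, (2 * cos θ) ^ (k + 2)
        = 4 * (k + 1) / (k + 2) * ∫ θ in (0 : ℝ)..2 * π, (2 * cos θ) ^ k := by
      simp only [mul_pow, integral_const_mul, integral_cos_pow, sin_zero, sin_two_pi]
      ring
    have hmoment : ((k : ℝ) + 2) * cosMoment (k + 2) = 4 * (k + 1) * cosMoment k := by
      exact_mod_cast cosMoment_add_two k
    rw [hrec, ih]
    field_simp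
    exact hmoment.symm

lemma integral_add_two_cos_pow (x : ℝ) (p : ℕ) :
    ∫ θ in (0 : ℝ)..2 * π, (x + 2 * cos θ) ^ p
      = 2 * π * ∑ k ∈ range (p + 1), p.choose k * cosMoment (p - k) * x ^ k := by
  have hexpand : ∀ θ, (x + 2 * cos θ) ^ p
      = ∑ k ∈ range (p + 1), (x ^ k * p.choose k) * (2 * cos θ) ^ (p - k) := fun θ => by
    rw [add_pow]
    exact sum_congr rfl fun k _ => by ring
  simp_rw [hexpand]
  rw [integral_finset_sum_const_mul _ _ (fun k _ => by fun_prop), mul_sum]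
  simp_rw [integral_two_cos_pow]
  exact sum_congr rfl fun k _ => by ring

def binomConv (f g : ℕ → ℕ) (p : ℕ) : ℕ :=
  ∑ k ∈ range (p + 1), p.choose k * f k * g (p - k)

section binomConv

variable {f g : ℕ → ℕ}

lemma binomConv_two_mul (hf : ∀ k, Odd k → f k = 0) (n : ℕ) :
    binomConv f g (2 * n)
      = ∑ l ∈ range (n + 1), (2 * n).choose (2 * l) * f (2 * l) * g (2 * (n - l)) := by
  rw [binomConv, sum_range_two_mul_add_one_of_odd (fun k hk => by rw [hf k hk, mul_zero, zero_mul])]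
  exact sum_congr rfl fun l _ => by rw [Nat.mul_sub]

lemma binomConv_of_odd (hf : ∀ k, Odd k → f k = 0) (hg : ∀ k, Odd k → g k = 0) {p : ℕ}
    (hp : Odd p) : binomConv f g p = 0 := by
  refine sum_eq_zero fun k hk => ?_
  rcases Nat.even_or_odd k with hk' | hk'
  · rw [hg _ (Nat.Odd.sub_even (mem_range_succ_iff.mp hk) hp hk'), mul_zero]
  · rw [hf _ hk', mul_zero, zero_mul]

end binomConv

lemma binomConv_cosMoment_cosMoment_of_odd {p : ℕ} (hp : Odd p) :
    binomConv cosMoment cosMoment p = 0 :=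
  binomConv_of_odd (fun _ => cosMoment_of_odd) (fun _ => cosMoment_of_odd) hp

lemma binomConv_binomConv_cosMoment_of_odd {p : ℕ} (hp : Odd p) :
    binomConv (binomConv cosMoment cosMoment) cosMoment p = 0 :=
  binomConv_of_odd (fun _ => binomConv_cosMoment_cosMoment_of_odd) (fun _ => cosMoment_of_odd) hp

lemma integral_integral_two_cos_add_two_cos_pow (p : ℕ) :
    ∫ θ₁ in (0 : ℝ)..2 * π, ∫ θ₂ in (0 : ℝ)..2 * π, (2 * cos θ₁ + 2 * cos θ₂) ^ p
      = (2 * π) ^ 2 * binomConv cosMoment cosMoment p := by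
  simp_rw [integral_add_two_cos_pow, integral_const_mul]
  rw [integral_finset_sum_const_mul _ _ (fun k _ => by fun_prop)]
  simp_rw [integral_two_cos_pow, binomConv]
  push_cast
  rw [mul_sum, mul_sum]
  exact sum_congr rfl fun k _ => by ring

lemma integral_integral_integral_two_cos_add_two_cos_add_two_cos_pow (m : ℕ) :
    ∫ θ₁ in (0 : ℝ)..2 * π, ∫ θ₂ in (0 : ℝ)..2 * π, ∫ θ₃ in (0 : ℝ)..2 * π,
        (2 * cos θ₁ + 2 * cos θ₂ + 2 * cos θ₃) ^ m
      = (2 * π) ^ 3 * binomConv (binomConv cosMoment cosMoment) cosMoment m := by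
  have hinner : ∀ θ₁, ∫ θ₂ in (0 : ℝ)..2 * π, ∫ θ₃ in (0 : ℝ)..2 * π,
        (2 * cos θ₁ + 2 * cos θ₂ + 2 * cos θ₃) ^ m
      = 2 * π * ∑ k ∈ range (m + 1), (m.choose k * cosMoment (m - k) : ℝ) *
          ∫ θ₂ in (0 : ℝ)..2 * π, (2 * cos θ₁ + 2 * cos θ₂) ^ k := fun θ₁ => by
    conv_lhs => simp only [integral_add_two_cos_pow, integral_const_mul]
    rw [integral_finset_sum_const_mul _ _ (fun k _ => by fun_prop)]
  simp_rw [hinner, integral_const_mul]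
  rw [integral_finset_sum_const_mul _ _ (fun k _ =>
    continuous_parametric_intervalIntegral_of_continuous' (by fun_prop) _ _)]
  simp_rw [integral_integral_two_cos_add_two_cos_pow, binomConv]
  push_cast
  rw [mul_sum, mul_sum]
  exact sum_congr rfl fun k _ => by ring

lemma binomConv_cosMoment_cosMoment_two_mul (s : ℕ) :
    binomConv cosMoment cosMoment (2 * s) = Nat.centralBinom s ^ 2 := by
  rw [binomConv_two_mul (fun _ => cosMoment_of_odd)]
  calc ∑ l ∈ range (s + 1), (2 * s).choose (2 * l) * cosMoment (2 * l) * cosMoment (2 * (s - l))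
      = ∑ l ∈ range (s + 1), Nat.centralBinom s * s.choose l ^ 2 :=
        sum_congr rfl fun l hl => by
          rw [cosMoment_two_mul, cosMoment_two_mul,
            choose_mul_centralBinom_mul_centralBinom (mem_range_succ_iff.mp hl)]
    _ = Nat.centralBinom s ^ 2 := by
        rw [← mul_sum, Nat.sum_range_choose_sq, ← Nat.centralBinom_eq_two_mul_choose, sq]

lemma binomConv_binomConv_cosMoment_two_mul (n : ℕ) :
    binomConv (binomConv cosMoment cosMoment) cosMoment (2 * n)
      = Nat.centralBinom n * ∑ l ∈ range (n + 1), Nat.centralBinom l * n.choose l ^ 2 := by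
  rw [binomConv_two_mul (fun _ => binomConv_cosMoment_cosMoment_of_odd), mul_sum]
  refine sum_congr rfl fun l hl => ?_
  rw [binomConv_cosMoment_cosMoment_two_mul, cosMoment_two_mul]
  linear_combination Nat.centralBinom l *
    choose_mul_centralBinom_mul_centralBinom (mem_range_succ_iff.mp hl)

/-- The constant Laurent coefficient of `(u + u⁻¹ + v + v⁻¹ + w + w⁻¹)^m`, i.e. the triple
torus average of `(2 cos θ₁ + 2 cos θ₂ + 2 cos θ₃)^m`, equals
`C(2n,n) ∑_{l=0}^{n} C(2l,l) C(n,l)²` when `m = 2n` is even, and `0` when `m` is odd. -/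
theorem constant_term_P1P1P1 (m : ℕ) :
    (∀ n : ℕ, m = 2 * n →
      (1 / (2 * Real.pi) ^ 3) *
          (∫ θ₁ in (0 : ℝ)..(2 * Real.pi), ∫ θ₂ in (0 : ℝ)..(2 * Real.pi),
            ∫ θ₃ in (0 : ℝ)..(2 * Real.pi),
              (2 * Real.cos θ₁ + 2 * Real.cos θ₂ + 2 * Real.cos θ₃) ^ m)
        = (Nat.choose (2 * n) n : ℝ) *
            ∑ l ∈ Finset.range (n + 1),
              (Nat.choose (2 * l) l : ℝ) * (Nat.choose n l : ℝ) ^ 2) ∧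
    (¬ 2 ∣ m →
      (1 / (2 * Real.pi) ^ 3) *
          (∫ θ₁ in (0 : ℝ)..(2 * Real.pi), ∫ θ₂ in (0 : ℝ)..(2 * Real.pi),
            ∫ θ₃ in (0 : ℝ)..(2 * Real.pi),
              (2 * Real.cos θ₁ + 2 * Real.cos θ₂ + 2 * Real.cos θ₃) ^ m)
        = 0) := by
  have hpi : (2 * π) ^ 3 ≠ 0 := by positivity
  simp_rw [integral_integral_integral_two_cos_add_two_cos_add_two_cos_pow, one_div,
    inv_mul_cancel_left₀ hpi]
  refine ⟨fun n hm => ?_, fun hm => ?_⟩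
  · rw [hm, binomConv_binomConv_cosMoment_two_mul]
    simp [Nat.centralBinom_eq_two_mul_choose]
  · rw [binomConv_binomConv_cosMoment_of_odd (Nat.odd_iff.mpr (by omega)), Nat.cast_zero]
end

section
/- For every natural number n ≥ 1, the constant Laurent coefficient of (z₁ + z₂ + z₃ + z₁^{-1} + z₂^{-1}z₃^{-1})^n, namely (2π)^{-3} ∫₀^{2π} ∫₀^{2π} ∫₀^{2π} (e^{iθ₁} + e^{iθ₂} + e^{iθ₃} + e^{-iθ₁} + e^{-i(θ₂+θ₃)})^n dθ₁ dθ₂ dθ₃, equals Σ_{i} C(n,i) · C(i, 2n−3i) · C(n−i, 2n−3i) · C(4i−2n, 2i−n), where the sum runs over integers i with n/2 ≤ i ≤ n for which all binomial arguments are nonnegative (equivalently 2i ≥ n and 3i ≤ 2n, with C(a,b) = 0 when b > a), and C denotes the binomial coefficient. -/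
open Complex intervalIntegral Finset
open scoped Nat Real

/-! By the multinomial theorem the integrand is a Laurent polynomial in `zⱼ = e^{iθⱼ}` whose
monomial indexed by `k ∈ ℕ⁵` (with `|k| = n`) is `z₁^(k₀-k₃) z₂^(k₁-k₄) z₃^(k₂-k₄)`.
Integrating over the torus keeps exactly the monomials with all three exponents zero, i.e.
`k = (a, b, b, a, b)` with `n = 2a + 3b`. These are parametrised by `i = a + 2b`, and the
multinomial coefficient of `(a, b, b, a, b)` factors as `C(n, i) C(i, a) C(a + b, a) C(2b, b)`. -/

theorem integral_exp_int_mul_I (m : ℤ) :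
    ∫ θ in (0 : ℝ)..2 * π, exp (m * I * θ) = if m = 0 then (2 * π : ℂ) else 0 := by
  split_ifs with hm
  · simp [hm]
  · have hc : (m : ℂ) * I ≠ 0 := mul_ne_zero (Int.cast_ne_zero.mpr hm) I_ne_zero
    rw [integral_exp_mul_complex hc, ofReal_mul, ofReal_ofNat,
      show (m : ℂ) * I * (2 * π) = m * (2 * π * I) by ring, exp_int_mul_two_pi_mul_I]
    simp

theorem integral_sum_mul_exp_int_mul_I {ι : Type*} (s : Finset ι) (c : ι → ℂ) (m : ι → ℤ) :
    ∫ θ in (0 : ℝ)..2 * π, ∑ k ∈ s, c k * exp (m k * I * θ) =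
      2 * π * ∑ k ∈ s with m k = 0, c k := by
  rw [integral_finsetSum fun k _ => by apply Continuous.intervalIntegrable; fun_prop,
    sum_filter, mul_sum]
  refine sum_congr rfl fun k _ => ?_
  rw [integral_const_mul, integral_exp_int_mul_I]
  split_ifs <;> ring

theorem integral_integral_integral_sum_mul_exp {ι : Type*} (s : Finset ι) (c : ι → ℂ)
    (m₁ m₂ m₃ : ι → ℤ) :
    ∫ θ₁ in (0 : ℝ)..2 * π, ∫ θ₂ in (0 : ℝ)..2 * π, ∫ θ₃ in (0 : ℝ)..2 * π,
      ∑ k ∈ s, c k * exp (m₁ k * I * θ₁) * exp (m₂ k * I * θ₂) * exp (m₃ k * I * θ₃) =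
      (2 * π) ^ 3 * ∑ k ∈ s with m₁ k = 0 ∧ m₂ k = 0 ∧ m₃ k = 0, c k := by
  simp only [integral_sum_mul_exp_int_mul_I, integral_const_mul, filter_filter]
  rw [show ∀ x, (2 * (π : ℂ)) ^ 3 * x = 2 * π * (2 * π * (2 * π * x)) from fun x => by ring]
  congr 3
  exact sum_congr (filter_congr fun k _ => by tauto) fun _ _ => rfl

theorem add_add_add_inv_add_inv_pow {K : Type*} [Field K] {x y z : K} (hx : x ≠ 0) (hy : y ≠ 0)
    (hz : z ≠ 0) (n : ℕ) :
    (x + y + z + x⁻¹ + (y * z)⁻¹) ^ n =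
      ∑ k ∈ piAntidiag (univ : Finset (Fin 5)) n, (Nat.multinomial univ k : K) *
        x ^ ((k 0 : ℤ) - k 3) * y ^ ((k 1 : ℤ) - k 4) * z ^ ((k 2 : ℤ) - k 4) := by
  have h5 : x + y + z + x⁻¹ + (y * z)⁻¹ = ∑ j, ![x, y, z, x⁻¹, (y * z)⁻¹] j := by
    simp [Fin.sum_univ_five]
  rw [h5, sum_pow_eq_sum_piAntidiag]
  refine sum_congr rfl fun k _ => ?_
  simp only [Fin.prod_univ_five, Matrix.cons_val, zpow_sub₀ hx, zpow_sub₀ hy, zpow_sub₀ hz,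
    zpow_natCast, inv_pow, mul_pow, mul_inv]
  field_simp

theorem torus_integrand_expansion (n : ℕ) (θ₁ θ₂ θ₃ : ℝ) :
    (exp (I * θ₁) + exp (I * θ₂) + exp (I * θ₃) + exp (-(I * θ₁)) + exp (-(I * (θ₂ + θ₃)))) ^ n =
      ∑ k ∈ piAntidiag (univ : Finset (Fin 5)) n, (Nat.multinomial univ k : ℂ) *
        exp (((k 0 : ℤ) - k 3 : ℤ) * I * θ₁) * exp (((k 1 : ℤ) - k 4 : ℤ) * I * θ₂) *
          exp (((k 2 : ℤ) - k 4 : ℤ) * I * θ₃) := by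
  rw [exp_neg, exp_neg, mul_add, exp_add,
    add_add_add_inv_add_inv_pow (exp_ne_zero _) (exp_ne_zero _) (exp_ne_zero _)]
  simp only [mul_assoc, exp_int_mul]

theorem Nat.multinomial_abbab (a b : ℕ) :
    Nat.multinomial univ ![a, b, b, a, b] =
      (a + 2 * b + (a + b)).choose (a + 2 * b) * (a + 2 * b).choose a * (a + b).choose a *
        (b + b).choose b := by
  have hspec := Nat.multinomial_spec (univ : Finset (Fin 5)) ![a, b, b, a, b]
  simp only [Fin.prod_univ_five, Fin.sum_univ_five, Matrix.cons_val,
    show a + b + b + a + b = a + 2 * b + (a + b) by ring] at hspec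
  apply Nat.cast_injective (R := ℚ)
  have hq : ((a ! * b ! * b ! * a ! * b ! : ℕ) : ℚ) * multinomial univ ![a, b, b, a, b] =
      (a + 2 * b + (a + b))! := by exact_mod_cast hspec
  push_cast [Nat.cast_add_choose] at hq ⊢
  rw [two_mul] at hq ⊢
  field_simp
  linear_combination hq

theorem sum_multinomial_balanced_piAntidiag (n : ℕ) :
    ∑ k ∈ piAntidiag (univ : Finset (Fin 5)) n with k 0 = k 3 ∧ k 1 = k 4 ∧ k 2 = k 4,
        Nat.multinomial univ k =
      ∑ i ∈ range (n + 1) with n ≤ 2 * i ∧ 3 * i ≤ 2 * n,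
        n.choose i * i.choose (2 * n - 3 * i) * (n - i).choose (2 * n - 3 * i) *
          (4 * i - 2 * n).choose (2 * i - n) := by
  have hmem : ∀ k : Fin 5 → ℕ,
      k ∈ {k ∈ piAntidiag (univ : Finset (Fin 5)) n |
        k 0 = k 3 ∧ k 1 = k 4 ∧ k 2 = k 4} ↔
        k 0 + k 1 + k 2 + k 3 + k 4 = n ∧ k 0 = k 3 ∧ k 1 = k 4 ∧ k 2 = k 4 := by
    simp [Fin.sum_univ_five]
  symm
  refine sum_nbij' (fun i => ![2 * n - 3 * i, 2 * i - n, 2 * i - n, 2 * n - 3 * i, 2 * i - n])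
    (fun k => k 0 + 2 * k 1) ?_ ?_ ?_ ?_ ?_
  · intro i hi
    simp only [mem_filter, mem_range] at hi
    simp only [hmem, Matrix.cons_val, and_true]
    omega
  · intro k hk
    simp only [hmem] at hk
    simp only [mem_filter, mem_range]
    omega
  · intro i hi
    simp only [mem_filter, mem_range] at hi
    simp only [Matrix.cons_val]
    omega
  · intro k hk
    simp only [hmem] at hk
    funext j
    fin_cases j <;> simp <;> omega
  · intro i hi
    simp only [mem_filter, mem_range] at hi
    obtain ⟨a, b, ha, hb⟩ : ∃ a b, 2 * n - 3 * i = a ∧ 2 * i - n = b := ⟨_, _, rfl, rfl⟩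
    rw [ha, hb, Nat.multinomial_abbab, show n - i = a + b by omega,
      show 4 * i - 2 * n = b + b by omega, show n = a + 2 * b + (a + b) by omega,
      show i = a + 2 * b by omega]

theorem constant_term_P2P1_general (n : ℕ) :
    ((1 : ℂ) / (2 * Real.pi) ^ 3) *
        (∫ θ₁ in (0 : ℝ)..(2 * Real.pi), ∫ θ₂ in (0 : ℝ)..(2 * Real.pi),
          ∫ θ₃ in (0 : ℝ)..(2 * Real.pi),
            (Complex.exp (Complex.I * (θ₁ : ℂ)) + Complex.exp (Complex.I * (θ₂ : ℂ)) +
              Complex.exp (Complex.I * (θ₃ : ℂ)) + Complex.exp (-(Complex.I * (θ₁ : ℂ))) +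
              Complex.exp (-(Complex.I * ((θ₂ : ℂ) + (θ₃ : ℂ))))) ^ n)
      = ∑ i ∈ (Finset.range (n + 1)).filter (fun i => n ≤ 2 * i ∧ 3 * i ≤ 2 * n),
          (Nat.choose n i : ℂ) * (Nat.choose i (2 * n - 3 * i) : ℂ) *
            (Nat.choose (n - i) (2 * n - 3 * i) : ℂ) *
            (Nat.choose (4 * i - 2 * n) (2 * i - n) : ℂ) := by
  have h2π : (2 * π : ℂ) ^ 3 ≠ 0 := by simp [Real.pi_ne_zero]
  simp only [torus_integrand_expansion, integral_integral_integral_sum_mul_exp, sub_eq_zero,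
    Nat.cast_inj]
  rw [← mul_assoc, one_div, inv_mul_cancel₀ h2π, one_mul]
  exact_mod_cast sum_multinomial_balanced_piAntidiag n

/-- The constant Laurent coefficient of `(z₁ + z₂ + z₃ + z₁⁻¹ + z₂⁻¹z₃⁻¹)ⁿ`, computed as a
triple torus average, equals `∑ᵢ C(n,i) C(i,2n−3i) C(n−i,2n−3i) C(4i−2n,2i−n)`, the sum
running over `i` with `2i ≥ n` and `3i ≤ 2n` (so `n/2 ≤ i ≤ n` and all binomial arguments
are nonnegative; `C(a,b) = 0` when `b > a`). -/
theorem constant_term_P2P1 (n : ℕ) (hn : 1 ≤ n) :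
    ((1 : ℂ) / (2 * Real.pi) ^ 3) *
        (∫ θ₁ in (0 : ℝ)..(2 * Real.pi), ∫ θ₂ in (0 : ℝ)..(2 * Real.pi),
          ∫ θ₃ in (0 : ℝ)..(2 * Real.pi),
            (Complex.exp (Complex.I * (θ₁ : ℂ)) + Complex.exp (Complex.I * (θ₂ : ℂ)) +
              Complex.exp (Complex.I * (θ₃ : ℂ)) + Complex.exp (-(Complex.I * (θ₁ : ℂ))) +
              Complex.exp (-(Complex.I * ((θ₂ : ℂ) + (θ₃ : ℂ))))) ^ n)
      = ∑ i ∈ (Finset.range (n + 1)).filter (fun i => n ≤ 2 * i ∧ 3 * i ≤ 2 * n),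
          (Nat.choose n i : ℂ) * (Nat.choose i (2 * n - 3 * i) : ℂ) *
            (Nat.choose (n - i) (2 * n - 3 * i) : ℂ) *
            (Nat.choose (4 * i - 2 * n) (2 * i - n) : ℂ) :=
  constant_term_P2P1_general n
end

section
/- For every natural number n ≥ 1, the constant Laurent coefficient of (z + z^{-1} + w + w^{-1} + z^{-1}w^{-1})^n, namely (2π)^{-2} ∫₀^{2π} ∫₀^{2π} (e^{iθ} + e^{-iθ} + e^{iφ} + e^{-iφ} + e^{-i(θ+φ)})^n dθ dφ, equals Σ_{i} Σ_{j} C(n,i) · C(n−i, (n−j)/2) · C(i,j) · C(j, i/2), where the sum runs over integers 0 ≤ i ≤ n and 0 ≤ j ≤ i such that i is even, n − j is even, and j ≥ i/2, with the convention C(a,b) = 0 when b > a, and C denotes the binomial coefficient. -/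
/-!
The integrand is `p(e^{iθ}, e^{iφ})ⁿ` for the Laurent polynomial
`p(z, w) = (z + z⁻¹) + ((w + w⁻¹) + z⁻¹w⁻¹)`. Three nested binomial expansions write `pⁿ` as the
sum of the monomials `C(n,i) C(n−i,s) C(i,j) C(j,l) z^{2s+j−n} w^{2l−i}`. Averaging over the torus
kills every non-constant monomial, and the constraints `2l = i`, `2s = n − j` leave exactly one
`(l, s)` for each admissible `(i, j)`.
-/

open Complex Finset

section Laurent

variable {K : Type*} [Field K]

theorem add_inv_pow_eq_sum {u : K} (hu : u ≠ 0) (m : ℕ) :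
    (u + u⁻¹) ^ m = ∑ s ∈ range (m + 1), (m.choose s : K) * u ^ (2 * (s : ℤ) - m) := by
  rw [add_pow]
  refine sum_congr rfl fun s hs => ?_
  have hsm : s ≤ m := Nat.lt_succ_iff.mp (mem_range.mp hs)
  rw [inv_pow, ← zpow_natCast, ← zpow_natCast, ← zpow_neg, ← zpow_add₀ hu, mul_comm]
  congr 2
  omega

def dP2Laurent (z w : K) : K := z + z⁻¹ + w + w⁻¹ + z⁻¹ * w⁻¹

theorem dP2Laurent_pow_eq_sum {z w : K} (hz : z ≠ 0) (hw : w ≠ 0) (n : ℕ) :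
    dP2Laurent z w ^ n = ∑ i ∈ range (n + 1), ∑ j ∈ range (i + 1), ∑ l ∈ range (j + 1),
      ∑ s ∈ range (n - i + 1),
        (n.choose i * (n - i).choose s * i.choose j * j.choose l : K) *
          z ^ (2 * (s : ℤ) + j - n) * w ^ (2 * (l : ℤ) - i) := by
  rw [dP2Laurent, show z + z⁻¹ + w + w⁻¹ + z⁻¹ * w⁻¹ = (w + w⁻¹ + z⁻¹ * w⁻¹) + (z + z⁻¹) by ring,
    add_pow]
  refine sum_congr rfl fun i hi => ?_
  have hin : i ≤ n := Nat.lt_succ_iff.mp (mem_range.mp hi)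
  simp_rw [add_pow (w + w⁻¹), add_inv_pow_eq_sum hw, add_inv_pow_eq_sum hz, sum_mul, mul_sum]
  refine sum_congr rfl fun j hj => ?_
  have hji : j ≤ i := Nat.lt_succ_iff.mp (mem_range.mp hj)
  refine sum_congr rfl fun l _ => ?_
  rw [sum_mul]
  refine sum_congr rfl fun s _ => ?_
  have hz_exp : z ^ (2 * (s : ℤ) + j - n) = z ^ (2 * (s : ℤ) - (n - i : ℕ)) * (z ^ (i - j))⁻¹ := by
    rw [← zpow_natCast, ← zpow_neg, ← zpow_add₀ hz]
    congr 1
    omega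
  have hw_exp : w ^ (2 * (l : ℤ) - i) = w ^ (2 * (l : ℤ) - j) * (w ^ (i - j))⁻¹ := by
    rw [← zpow_natCast, ← zpow_neg, ← zpow_add₀ hw]
    congr 1
    omega
  rw [hz_exp, hw_exp, mul_pow, inv_pow, inv_pow]
  ring

end Laurent

theorem sum_range_ite_two_mul_eq {M : Type*} [AddCommMonoid M] (m N : ℕ) (g : ℕ → M) :
    ∑ s ∈ range (m + 1), (if 2 * s = N then g s else 0) =
      if 2 ∣ N ∧ N / 2 ≤ m then g (N / 2) else 0 := by
  have h (s : ℕ) : 2 * s = N ↔ 2 ∣ N ∧ s = N / 2 := by omega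
  simp_rw [h, ite_and, sum_ite_irrel, sum_const_zero, sum_ite_eq', mem_range, Nat.lt_succ_iff]

theorem sum_constant_terms_dP2Laurent_expansion {R : Type*} [Semiring R] (n : ℕ) :
    ∑ i ∈ range (n + 1), ∑ j ∈ range (i + 1), ∑ l ∈ range (j + 1), ∑ s ∈ range (n - i + 1),
        (if 2 * (s : ℤ) + j - n = 0 ∧ 2 * (l : ℤ) - i = 0 then
          (n.choose i * (n - i).choose s * i.choose j * j.choose l : R) else 0) =
      ∑ i ∈ (range (n + 1)).filter (fun i => 2 ∣ i),
        ∑ j ∈ (range (i + 1)).filter (fun j => 2 ∣ (n - j) ∧ i / 2 ≤ j),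
          (n.choose i * (n - i).choose ((n - j) / 2) * i.choose j * j.choose (i / 2) : R) := by
  simp_rw [sum_filter]
  refine sum_congr rfl fun i hi => ?_
  have hin : i ≤ n := Nat.lt_succ_iff.mp (mem_range.mp hi)
  split_ifs with hi_even
  swap
  · exact sum_eq_zero fun j _ => sum_eq_zero fun l _ => sum_eq_zero fun s _ => if_neg (by omega)
  refine sum_congr rfl fun j hj => ?_
  have hji : j ≤ i := Nat.lt_succ_iff.mp (mem_range.mp hj)
  have hcond (l s : ℕ) :
      (2 * (s : ℤ) + j - n = 0 ∧ 2 * (l : ℤ) - i = 0) ↔ (2 * l = i ∧ 2 * s = n - j) := by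
    omega
  simp_rw [hcond, ite_and, sum_ite_irrel, sum_const_zero, sum_range_ite_two_mul_eq]
  have hvanish : n - i < (n - j) / 2 → (n - i).choose ((n - j) / 2) = 0 :=
    Nat.choose_eq_zero_of_lt
  split_ifs <;> simp_all

theorem integral_exp_I_mul_zpow (m : ℤ) :
    ∫ x in (0 : ℝ)..(2 * Real.pi), exp (I * x) ^ m =
      if m = 0 then ((2 * Real.pi : ℝ) : ℂ) else 0 := by
  split_ifs with hm
  · simp [hm]
  · have hc : (m : ℂ) * I ≠ 0 := by simp [hm]
    simp_rw [← exp_int_mul, ← mul_assoc]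
    rw [integral_exp_mul_complex hc, div_eq_zero_iff, sub_eq_zero]
    left
    push_cast
    rw [show (m : ℂ) * I * (2 * Real.pi) = m * (2 * Real.pi * I) by ring,
      exp_int_mul_two_pi_mul_I, mul_zero, exp_zero]

theorem integral_sum_mul_exp_I_mul_zpow {ι : Type*} (s : Finset ι) (c : ι → ℂ) (m : ι → ℤ) :
    ∫ x in (0 : ℝ)..(2 * Real.pi), ∑ i ∈ s, c i * exp (I * x) ^ m i
      = ((2 * Real.pi : ℝ) : ℂ) * ∑ i ∈ s with m i = 0, c i := by
  have hcont (i : ι) : Continuous fun x : ℝ => c i * exp (I * x) ^ m i := by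
    simp_rw [← exp_int_mul]
    fun_prop
  rw [intervalIntegral.integral_finsetSum fun i _ => (hcont i).intervalIntegrable _ _,
    sum_filter, mul_sum]
  refine sum_congr rfl fun i _ => ?_
  rw [intervalIntegral.integral_const_mul, integral_exp_I_mul_zpow]
  split_ifs <;> ring

theorem integral_integral_sum_mul_exp_I_mul_zpow {ι : Type*} (s : Finset ι) (c : ι → ℂ)
    (a b : ι → ℤ) :
    ∫ θ in (0 : ℝ)..(2 * Real.pi), ∫ φ in (0 : ℝ)..(2 * Real.pi),
        ∑ i ∈ s, c i * exp (I * θ) ^ a i * exp (I * φ) ^ b i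
      = ((2 * Real.pi : ℝ) : ℂ) ^ 2 * ∑ i ∈ s with a i = 0 ∧ b i = 0, c i := by
  simp_rw [integral_sum_mul_exp_I_mul_zpow, intervalIntegral.integral_const_mul,
    integral_sum_mul_exp_I_mul_zpow, filter_filter, and_comm, ← mul_assoc, sq]

theorem constant_term_dP2_general (n : ℕ) :
    ((1 : ℂ) / (2 * Real.pi) ^ 2) *
        (∫ θ in (0 : ℝ)..(2 * Real.pi), ∫ φ in (0 : ℝ)..(2 * Real.pi),
          (Complex.exp (Complex.I * (θ : ℂ)) + Complex.exp (-(Complex.I * (θ : ℂ))) +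
            Complex.exp (Complex.I * (φ : ℂ)) + Complex.exp (-(Complex.I * (φ : ℂ))) +
            Complex.exp (-(Complex.I * ((θ : ℂ) + (φ : ℂ))))) ^ n)
      = ∑ i ∈ (Finset.range (n + 1)).filter (fun i => 2 ∣ i),
          ∑ j ∈ (Finset.range (i + 1)).filter (fun j => 2 ∣ (n - j) ∧ i / 2 ≤ j),
            (Nat.choose n i : ℂ) * (Nat.choose (n - i) ((n - j) / 2) : ℂ) *
              (Nat.choose i j : ℂ) * (Nat.choose j (i / 2) : ℂ) := by
  have h_integrand (θ φ : ℝ) : exp (I * θ) + exp (-(I * θ)) + exp (I * φ) + exp (-(I * φ)) +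
      exp (-(I * (θ + φ))) = dP2Laurent (exp (I * θ)) (exp (I * φ)) := by
    rw [dP2Laurent, ← exp_neg, ← exp_neg, ← exp_add, ← neg_add, mul_add]
  rw [← sum_constant_terms_dP2Laurent_expansion]
  simp only [h_integrand, dP2Laurent_pow_eq_sum (exp_ne_zero _) (exp_ne_zero _), sum_sigma']
  rw [integral_integral_sum_mul_exp_I_mul_zpow, ofReal_mul, ofReal_ofNat, one_div,
    inv_mul_cancel_left₀ (by simp [Real.pi_ne_zero]), sum_filter]

/-- The constant Laurent coefficient of `(z + z⁻¹ + w + w⁻¹ + z⁻¹w⁻¹)ⁿ`, computed as a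
torus average, equals `∑_{i,j} C(n,i) C(n−i,(n−j)/2) C(i,j) C(j,i/2)`, the sum running
over `0 ≤ i ≤ n`, `0 ≤ j ≤ i` with `i` even, `n − j` even and `j ≥ i/2`
(`C(a,b) = 0` when `b > a`). -/
theorem constant_term_dP2 (n : ℕ) (hn : 1 ≤ n) :
    ((1 : ℂ) / (2 * Real.pi) ^ 2) *
        (∫ θ in (0 : ℝ)..(2 * Real.pi), ∫ φ in (0 : ℝ)..(2 * Real.pi),
          (Complex.exp (Complex.I * (θ : ℂ)) + Complex.exp (-(Complex.I * (θ : ℂ))) +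
            Complex.exp (Complex.I * (φ : ℂ)) + Complex.exp (-(Complex.I * (φ : ℂ))) +
            Complex.exp (-(Complex.I * ((θ : ℂ) + (φ : ℂ))))) ^ n)
      = ∑ i ∈ (Finset.range (n + 1)).filter (fun i => 2 ∣ i),
          ∑ j ∈ (Finset.range (i + 1)).filter (fun j => 2 ∣ (n - j) ∧ i / 2 ≤ j),
            (Nat.choose n i : ℂ) * (Nat.choose (n - i) ((n - j) / 2) : ℂ) *
              (Nat.choose i j : ℂ) * (Nat.choose j (i / 2) : ℂ) :=
  constant_term_dP2_general n
end
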